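/- Let {G_α, σ_α, q^α_β, A} be an inverse system of locally compact Hausdorff topological groupoids with continuous 𝕋-valued 2-cocycles σ_α, where the bonding maps q^α_β are proper, continuous, surjective, cocycle preserving groupoid homomorphisms. Then the inverse limit G = lim← G_α in locally compact Hausdorff spaces carries a topological groupoid structure (with continuous multiplication and inversion) such that each projection q_α : G → G_α is a proper continuous groupoid homomorphism, and the map σ : G⁽²⁾ → 𝕋 defined by σ(g,h) being the common value lim σ_α(q_α(g), q_α(h)) is a continuous 2-cocycle on G with q_α-pullbacks equal to σ_α. -/
import Mathlib


open MeasureTheory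

/-- A (topological) groupoid structure on a space `G` of arrows: source and target maps
`src, tgt : G → G` (with values the unit arrows), a partial multiplication `mul`
(meaningful on composable pairs, i.e. when `src g = tgt h`), and inversion, all
continuous (multiplication on the set of composable pairs). -/
structure TopGroupoid (G : Type*) [TopologicalSpace G] where
  src : G → G
  tgt : G → G
  mul : G → G → G
  inv : G → G
  continuous_src : Continuous src
  continuous_tgt : Continuous tgt
  continuous_inv : Continuous inv
  continuous_mul : ContinuousOn (fun p : G × G => mul p.1 p.2) {p : G × G | src p.1 = tgt p.2}
  inv_mul : ∀ g, mul (inv g) g = src g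
  mul_inv : ∀ g, mul g (inv g) = tgt g
  mul_src : ∀ g, mul g (src g) = g
  tgt_mul : ∀ g, mul (tgt g) g = g
  src_inv : ∀ g, src (inv g) = tgt g
  inv_inv : ∀ g, inv (inv g) = g
  src_mul : ∀ g h, src g = tgt h → src (mul g h) = src h
  tgt_mul_eq : ∀ g h, src g = tgt h → tgt (mul g h) = tgt g
  mul_assoc : ∀ g h k, src g = tgt h → src h = tgt k →
    mul (mul g h) k = mul g (mul h k)

namespace TopGroupoid

variable {G : Type*} [TopologicalSpace G]

/-- The unit space of a groupoid: the fixed points of the source map. -/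
def units (𝒢 : TopGroupoid G) : Set G := {x : G | 𝒢.src x = x}

end TopGroupoid

/-- A Haar system of measures on a topological groupoid: a family of regular Radon
measures `μˣ` indexed by the units, `μˣ` supported on the fiber `tgt⁻¹(x)`, varying
continuously against compactly supported continuous functions, and left-invariant. -/
structure IsHaarSystem {G : Type*} [TopologicalSpace G] [MeasurableSpace G] [BorelSpace G]
    (𝒢 : TopGroupoid G) (μ : G → Measure G) : Prop where
  regular : ∀ x ∈ 𝒢.units, (μ x).Regular
  supported : ∀ x ∈ 𝒢.units, μ x {g : G | 𝒢.tgt g ≠ x} = 0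
  continuous_integral : ∀ f : G → ℝ, Continuous f → HasCompactSupport f →
    ContinuousOn (fun x : G => ∫ g, f g ∂(μ x)) 𝒢.units
  left_invariant : ∀ g : G, ∀ f : G → ℝ, Continuous f → HasCompactSupport f →
    ∫ h, f h ∂(μ (𝒢.tgt g)) = ∫ h, f (𝒢.mul g h) ∂(μ (𝒢.src g))

/-- A (continuous) groupoid homomorphism between topological groupoids. -/
def IsGroupoidHom {G H : Type*} [TopologicalSpace G] [TopologicalSpace H]
    (𝒢 : TopGroupoid G) (ℋ : TopGroupoid H) (q : G → H) : Prop :=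
  Continuous q ∧
  (∀ g, q (𝒢.src g) = ℋ.src (q g)) ∧
  (∀ g, q (𝒢.tgt g) = ℋ.tgt (q g)) ∧
  (∀ g, q (𝒢.inv g) = ℋ.inv (q g)) ∧
  (∀ g h, 𝒢.src g = 𝒢.tgt h → q (𝒢.mul g h) = ℋ.mul (q g) (q h))

/-- The inverse limit space of an inverse system of spaces `G α` with bonding maps `q`. -/
abbrev InvLimitSp {ι : Type*} [Preorder ι] (G : ι → Type*) (q : ∀ α β : ι, β ≤ α → G α → G β) :=
  {x : ∀ α, G α // ∀ α β (h : β ≤ α), q α β h (x α) = x β}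


namespace TopGroupoid

variable {G : Type*} [TopologicalSpace G] (𝒢 : TopGroupoid G)

theorem tgt_inv (g : G) : 𝒢.tgt (𝒢.inv g) = 𝒢.src g := by
  conv_rhs => rw [← 𝒢.inv_inv g]
  exact (𝒢.src_inv (𝒢.inv g)).symm

theorem tgt_src (g : G) : 𝒢.tgt (𝒢.src g) = 𝒢.src g := by
  have h : 𝒢.tgt (𝒢.mul (𝒢.inv g) g) = 𝒢.tgt (𝒢.inv g) :=
    𝒢.tgt_mul_eq _ _ (𝒢.src_inv g)
  rwa [𝒢.inv_mul, 𝒢.tgt_inv] at h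

theorem src_tgt (g : G) : 𝒢.src (𝒢.tgt g) = 𝒢.tgt g := by
  have h : 𝒢.src (𝒢.mul g (𝒢.inv g)) = 𝒢.src (𝒢.inv g) :=
    𝒢.src_mul _ _ (𝒢.tgt_inv g).symm
  rwa [𝒢.mul_inv, 𝒢.src_inv] at h

end TopGroupoid

/-- **Inverse limits of groupoids with 2-cocycles.**
Given an inverse system `{G α, σ α, q α β}` over a directed index set of locally compact
Hausdorff topological groupoids with continuous `𝕋`-valued 2-cocycles, with proper,
continuous, surjective, cocycle preserving groupoid homomorphisms as bonding maps, the
inverse limit space `L = lim← G α` (a locally compact Hausdorff space) carries a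
topological groupoid structure making all projections proper continuous groupoid
homomorphisms, together with a continuous 2-cocycle `σ` on `L` whose pullbacks along
the projections are the `σ α`. -/
theorem inverse_limit_groupoid_exists
    {ι : Type*} [Preorder ι] [IsDirected ι (· ≤ ·)] [Nonempty ι]
    (G : ι → Type*) [∀ α, TopologicalSpace (G α)]
    [∀ α, T2Space (G α)] [∀ α, LocallyCompactSpace (G α)]
    (𝒢 : ∀ α, TopGroupoid (G α))
    (σ : ∀ α, G α → G α → Circle)
    (hσcont : ∀ α, ContinuousOn (fun p : G α × G α => σ α p.1 p.2)
      {p : G α × G α | (𝒢 α).src p.1 = (𝒢 α).tgt p.2})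
    (hσcocycle : ∀ α, ∀ g h k, (𝒢 α).src g = (𝒢 α).tgt h → (𝒢 α).src h = (𝒢 α).tgt k →
      σ α g h * σ α ((𝒢 α).mul g h) k = σ α g ((𝒢 α).mul h k) * σ α h k)
    (q : ∀ α β : ι, β ≤ α → G α → G β)
    (hq_id : ∀ α (h : α ≤ α), q α α h = id)
    (hq_comp : ∀ α β γ (h₁ : γ ≤ β) (h₂ : β ≤ α) (g : G α),
      q β γ h₁ (q α β h₂ g) = q α γ (h₁.trans h₂) g)
    (hq_hom : ∀ α β (h : β ≤ α), IsGroupoidHom (𝒢 α) (𝒢 β) (q α β h))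
    (hq_proper : ∀ α β (h : β ≤ α), ∀ K : Set (G β), IsCompact K → IsCompact (q α β h ⁻¹' K))
    (hq_surj : ∀ α β (h : β ≤ α), Function.Surjective (q α β h))
    (hq_cocycle : ∀ α β (h : β ≤ α), ∀ g k : G α, (𝒢 α).src g = (𝒢 α).tgt k →
      σ β (q α β h g) (q α β h k) = σ α g k) :
    ∃ 𝒢L : TopGroupoid (InvLimitSp G q),
      (∀ α, IsGroupoidHom 𝒢L (𝒢 α) (fun x => x.1 α)) ∧
      (∀ α, ∀ K : Set (G α), IsCompact K →
        IsCompact ((fun x : InvLimitSp G q => x.1 α) ⁻¹' K)) ∧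
      ∃ σL : InvLimitSp G q → InvLimitSp G q → Circle,
        ContinuousOn (fun p : InvLimitSp G q × InvLimitSp G q => σL p.1 p.2)
          {p : InvLimitSp G q × InvLimitSp G q | 𝒢L.src p.1 = 𝒢L.tgt p.2} ∧
        (∀ g h k, 𝒢L.src g = 𝒢L.tgt h → 𝒢L.src h = 𝒢L.tgt k →
          σL g h * σL (𝒢L.mul g h) k = σL g (𝒢L.mul h k) * σL h k) ∧
        (∀ α, ∀ g h, 𝒢L.src g = 𝒢L.tgt h → σ α (g.1 α) (h.1 α) = σL g h) := by
  classical
  set L := InvLimitSp G q with hLdef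
  -- componentwise structure maps
  let srcL : L → L := fun x => ⟨fun α => (𝒢 α).src (x.1 α), fun α β h => by
    rw [(hq_hom α β h).2.1, x.2 α β h]⟩
  let tgtL : L → L := fun x => ⟨fun α => (𝒢 α).tgt (x.1 α), fun α β h => by
    rw [(hq_hom α β h).2.2.1, x.2 α β h]⟩
  let invL : L → L := fun x => ⟨fun α => (𝒢 α).inv (x.1 α), fun α β h => by
    rw [(hq_hom α β h).2.2.2.1, x.2 α β h]⟩
  let mulL : L → L → L := fun g h =>
    if hc : ∀ α, (𝒢 α).src (g.1 α) = (𝒢 α).tgt (h.1 α) then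
      ⟨fun α => (𝒢 α).mul (g.1 α) (h.1 α), fun α β hh => by
        rw [(hq_hom α β hh).2.2.2.2 _ _ (hc α), g.2 α β hh, h.2 α β hh]⟩
    else g
  have hcomp : ∀ g h : L, srcL g = tgtL h ↔
      ∀ α, (𝒢 α).src (g.1 α) = (𝒢 α).tgt (h.1 α) := by
    intro g h
    constructor
    · intro e α; exact congrFun (congrArg Subtype.val e) α
    · intro e; exact Subtype.ext (funext e)
  have hmul_val : ∀ (g h : L) (hc : ∀ α, (𝒢 α).src (g.1 α) = (𝒢 α).tgt (h.1 α)),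
      mulL g h = ⟨fun α => (𝒢 α).mul (g.1 α) (h.1 α), fun α β hh => by
        rw [(hq_hom α β hh).2.2.2.2 _ _ (hc α), g.2 α β hh, h.2 α β hh]⟩ := by
    intro g h hc
    simp only [mulL, dif_pos hc]
  have hc_src : Continuous srcL := Continuous.subtype_mk (continuous_pi fun α =>
      ((𝒢 α).continuous_src).comp ((continuous_apply α).comp continuous_subtype_val)) _
  have hc_tgt : Continuous tgtL := Continuous.subtype_mk (continuous_pi fun α =>
      ((𝒢 α).continuous_tgt).comp ((continuous_apply α).comp continuous_subtype_val)) _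
  have hc_inv : Continuous invL := Continuous.subtype_mk (continuous_pi fun α =>
      ((𝒢 α).continuous_inv).comp ((continuous_apply α).comp continuous_subtype_val)) _
  have hc_mul : ContinuousOn (fun p : L × L => mulL p.1 p.2)
      {p : L × L | srcL p.1 = tgtL p.2} := by
    rw [continuousOn_iff_continuous_restrict]
    have hF : Continuous (fun p : {p : L × L // p ∈ {p : L × L | srcL p.1 = tgtL p.2}} =>
        (⟨fun α => (𝒢 α).mul (p.1.1.1 α) (p.1.2.1 α), fun α β hh => by
          rw [(hq_hom α β hh).2.2.2.2 _ _ ((hcomp _ _).1 p.2 α), p.1.1.2 α β hh,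
            p.1.2.2 α β hh]⟩ : L)) := by
      refine Continuous.subtype_mk (continuous_pi fun α => ?_) _
      have hm := (𝒢 α).continuous_mul
      have hf : Continuous (fun p : {p : L × L // p ∈ {p : L × L | srcL p.1 = tgtL p.2}} =>
          ((p.1.1.1 α, p.1.2.1 α) : G α × G α)) := by
        refine Continuous.prodMk ?_ ?_
        · exact (continuous_apply α).comp (continuous_subtype_val.comp
            (continuous_fst.comp continuous_subtype_val))
        · exact (continuous_apply α).comp (continuous_subtype_val.comp
            (continuous_snd.comp continuous_subtype_val))
      exact hm.comp_continuous hf fun p => (hcomp _ _).1 p.2 α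
    refine hF.congr fun p => ?_
    simp only [Set.restrict_apply]
    exact (hmul_val p.1.1 p.1.2 ((hcomp _ _).1 p.2)).symm
  have hinv_mul : ∀ g, mulL (invL g) g = srcL g := by
    intro g
    rw [hmul_val _ _ (fun α => (𝒢 α).src_inv (g.1 α))]
    exact Subtype.ext (funext fun α => (𝒢 α).inv_mul (g.1 α))
  have hmul_inv : ∀ g, mulL g (invL g) = tgtL g := by
    intro g
    rw [hmul_val _ _ (fun α => ((𝒢 α).tgt_inv (g.1 α)).symm)]
    exact Subtype.ext (funext fun α => (𝒢 α).mul_inv (g.1 α))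
  have hmul_src : ∀ g, mulL g (srcL g) = g := by
    intro g
    rw [hmul_val _ _ (fun α => ((𝒢 α).tgt_src (g.1 α)).symm)]
    exact Subtype.ext (funext fun α => (𝒢 α).mul_src (g.1 α))
  have htgt_mul : ∀ g, mulL (tgtL g) g = g := by
    intro g
    rw [hmul_val _ _ (fun α => (𝒢 α).src_tgt (g.1 α))]
    exact Subtype.ext (funext fun α => (𝒢 α).tgt_mul (g.1 α))
  have hsrc_inv : ∀ g, srcL (invL g) = tgtL g := fun g =>
    Subtype.ext (funext fun α => (𝒢 α).src_inv (g.1 α))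
  have hinv_inv : ∀ g, invL (invL g) = g := fun g =>
    Subtype.ext (funext fun α => (𝒢 α).inv_inv (g.1 α))
  have hsrc_mul : ∀ g h, srcL g = tgtL h → srcL (mulL g h) = srcL h := by
    intro g h hgh
    rw [hmul_val _ _ ((hcomp _ _).1 hgh)]
    exact Subtype.ext (funext fun α => (𝒢 α).src_mul _ _ ((hcomp _ _).1 hgh α))
  have htgt_mul_eq : ∀ g h, srcL g = tgtL h → tgtL (mulL g h) = tgtL g := by
    intro g h hgh
    rw [hmul_val _ _ ((hcomp _ _).1 hgh)]
    exact Subtype.ext (funext fun α => (𝒢 α).tgt_mul_eq _ _ ((hcomp _ _).1 hgh α))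
  have hassoc : ∀ g h k, srcL g = tgtL h → srcL h = tgtL k →
      mulL (mulL g h) k = mulL g (mulL h k) := by
    intro g h k hgh hhk
    have hc1 := (hcomp _ _).1 hgh
    have hc2 := (hcomp _ _).1 hhk
    rw [hmul_val g h hc1, hmul_val h k hc2,
      hmul_val _ k (fun α => ((𝒢 α).src_mul _ _ (hc1 α)).trans (hc2 α)),
      hmul_val g _ (fun α => (hc1 α).trans ((𝒢 α).tgt_mul_eq _ _ (hc2 α)).symm)]
    exact Subtype.ext (funext fun α => (𝒢 α).mul_assoc _ _ _ (hc1 α) (hc2 α))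
  refine ⟨⟨srcL, tgtL, mulL, invL, hc_src, hc_tgt, hc_inv, hc_mul, hinv_mul, hmul_inv,
    hmul_src, htgt_mul, hsrc_inv, hinv_inv, hsrc_mul, htgt_mul_eq, hassoc⟩, ?_, ?_, ?_⟩
  -- projections are groupoid homomorphisms
  · intro α
    refine ⟨(continuous_apply α).comp continuous_subtype_val, fun g => rfl, fun g => rfl,
      fun g => rfl, fun g h hgh => ?_⟩
    exact congrFun (congrArg Subtype.val (hmul_val g h ((hcomp g h).1 hgh))) α
  -- properness of projections
  · intro α K hK
    have hdir : ∀ β : ι, ∃ γ, α ≤ γ ∧ β ≤ γ := fun β => exists_ge_ge α β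
    choose γ hγα hγβ using hdir
    set C : ∀ β, Set (G β) := fun β =>
      q (γ β) β (hγβ β) '' (q (γ β) α (hγα β) ⁻¹' K) with hC
    have hCcpt : ∀ β, IsCompact (C β) := fun β =>
      (hq_proper _ _ _ K hK).image (hq_hom _ _ _).1
    set A : Set (∀ β, G β) :=
      {x | (∀ a b (h : b ≤ a), q a b h (x a) = x b) ∧ x α ∈ K} with hA
    have himg : (Subtype.val : L → ∀ β, G β) '' ((fun x : L => x.1 α) ⁻¹' K) = A := by
      ext x
      constructor
      · rintro ⟨y, hy, rfl⟩; exact ⟨y.2, hy⟩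
      · rintro ⟨h1, h2⟩; exact ⟨⟨x, h1⟩, h2, rfl⟩
    have hAclosed : IsClosed A := by
      have h1 : IsClosed {x : ∀ β, G β | ∀ a b (h : b ≤ a), q a b h (x a) = x b} := by
        have : {x : ∀ β, G β | ∀ a b (h : b ≤ a), q a b h (x a) = x b} =
            ⋂ a, ⋂ b, ⋂ h : b ≤ a, {x | q a b h (x a) = x b} := by
          ext x; simp [Set.mem_iInter]
        rw [this]
        refine isClosed_iInter fun a => isClosed_iInter fun b => isClosed_iInter fun h => ?_
        exact isClosed_eq ((hq_hom a b h).1.comp (continuous_apply a)) (continuous_apply b)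
      have h2 : IsClosed ((fun x : ∀ β, G β => x α) ⁻¹' K) :=
        hK.isClosed.preimage (continuous_apply α)
      exact h1.inter h2
    have hAsub : A ⊆ Set.pi Set.univ C := by
      intro x hx β _
      refine ⟨x (γ β), ?_, hx.1 (γ β) β (hγβ β)⟩
      show q (γ β) α (hγα β) (x (γ β)) ∈ K
      rw [hx.1 (γ β) α (hγα β)]
      exact hx.2
    have hAcpt : IsCompact A :=
      (isCompact_univ_pi hCcpt).of_isClosed_subset hAclosed hAsub
    have hemb : Topology.IsEmbedding (Subtype.val : L → ∀ β, G β) :=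
      Topology.IsEmbedding.subtypeVal
    rw [hemb.isCompact_iff, himg]
    exact hAcpt
  -- the limit cocycle
  · set α₀ := Classical.arbitrary ι with hα₀
    refine ⟨fun g h => σ α₀ (g.1 α₀) (h.1 α₀), ?_, ?_, ?_⟩
    · -- continuity
      have hf : Continuous (fun p : L × L => ((p.1.1 α₀, p.2.1 α₀) : G α₀ × G α₀)) := by
        refine Continuous.prodMk ?_ ?_
        · exact (continuous_apply α₀).comp (continuous_subtype_val.comp continuous_fst)
        · exact (continuous_apply α₀).comp (continuous_subtype_val.comp continuous_snd)
      exact (hσcont α₀).comp hf.continuousOn fun p hp => (hcomp _ _).1 hp α₀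
    · -- cocycle identity
      intro g h k hgh hhk
      have hc1 := (hcomp _ _).1 hgh
      have hc2 := (hcomp _ _).1 hhk
      have m1 := congrFun (congrArg Subtype.val (hmul_val g h hc1)) α₀
      have m2 := congrFun (congrArg Subtype.val (hmul_val h k hc2)) α₀
      show σ α₀ (g.1 α₀) (h.1 α₀) * σ α₀ ((mulL g h).1 α₀) (k.1 α₀) =
        σ α₀ (g.1 α₀) ((mulL h k).1 α₀) * σ α₀ (h.1 α₀) (k.1 α₀)
      rw [m1, m2]
      exact hσcocycle α₀ _ _ _ (hc1 α₀) (hc2 α₀)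
    · -- pullbacks
      intro α g h hgh
      have hc := (hcomp _ _).1 hgh
      obtain ⟨δ, h1, h2⟩ := exists_ge_ge α α₀
      have e1 : σ α (g.1 α) (h.1 α) = σ δ (g.1 δ) (h.1 δ) := by
        rw [← g.2 δ α h1, ← h.2 δ α h1]
        exact hq_cocycle δ α h1 _ _ (hc δ)
      have e2 : σ α₀ (g.1 α₀) (h.1 α₀) = σ δ (g.1 δ) (h.1 δ) := by
        rw [← g.2 δ α₀ h2, ← h.2 δ α₀ h2]
        exact hq_cocycle δ α₀ h2 _ _ (hc δ)
      show σ α (g.1 α) (h.1 α) = σ α₀ (g.1 α₀) (h.1 α₀)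
      exact e1.trans e2.symm
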